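/- arXiv:0903.5105 — 6 statements merged into one kernel-verified Lean document; each statement's English description precedes it below -/
import Mathlib

section
/- Let A = e^{iπ/4} ∈ ℂ, and let ℤΦ = {n·z : n ∈ ℤ, z ∈ ℂ, z⁸ = 1}. For all integers a, b, k, l, the complex number a·Aᵏ + b·Aˡ belongs to ℤΦ if and only if a·b = 0 or k ≡ l (mod 4). -/
/-
Multiplying by `A ^ (-l)` reduces the question to `a * A ^ d + b` with `d = k - l`. Every power
of `A` is `±A ^ r` with `0 ≤ r < 4`, and `1, A, A², A³` are linearly independent over `ℚ`, since
the minimal polynomial of `A` is the cyclotomic polynomial `Φ₈ = X⁴ + 1`. If `d ≢ 0 (mod 4)`,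
an identity `±a * A ^ r + b = ±n * A ^ s` expresses a combination of two distinct basis vectors
as a multiple of a single one, which forces `a = 0` or `b = 0`.
-/

open Complex

/-- `A = e^{iπ/4}`, the primitive 8th root of unity. -/
noncomputable def A : ℂ := Complex.exp (Real.pi * Complex.I / 4)

/-- `ℤΦ`, the set of integer multiples of 8th roots of unity. -/
def ZPhi : Set ℂ := {w : ℂ | ∃ (n : ℤ) (z : ℂ), z ^ 8 = 1 ∧ w = (n : ℂ) * z}

theorem LinearIndependent.eq_zero_or_eq_zero_of_smul_add_smul_eq_smul {ι R M : Type*}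
    [Semiring R] [AddCommMonoid M] [Module R M] {v : ι → M} (hv : LinearIndependent R v)
    {i j k : ι} (hij : i ≠ j) {a b c : R} (h : a • v i + b • v j = c • v k) : a = 0 ∨ b = 0 := by
  have hsingle : Finsupp.single i a + Finsupp.single j b = Finsupp.single k c :=
    hv (by simpa only [map_add, Finsupp.linearCombination_single] using h)
  by_cases hki : k = i
  · right
    simpa [hki, hij] using DFunLike.congr_fun hsingle j
  · left
    simpa [hij, hki] using DFunLike.congr_fun hsingle i

lemma A_isPrimitiveRoot : IsPrimitiveRoot A 8 := by
  unfold A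
  convert Complex.isPrimitiveRoot_exp 8 (by norm_num) using 2
  push_cast
  ring

lemma A_ne_zero : A ≠ 0 := Complex.exp_ne_zero _

lemma A_pow_four : A ^ 4 = -1 := by
  rw [A, ← Complex.exp_nat_mul, ← Complex.exp_pi_mul_I]
  push_cast
  ring_nf

lemma exists_A_zpow_eq_unit_mul_pow (t : ℤ) :
    ∃ (u : ℤˣ) (r : Fin 4), (r : ℤ) = t % 4 ∧ A ^ t = (u : ℤ) * A ^ (r : ℕ) := by
  have hr : ((t % 4).toNat : ℤ) = t % 4 := Int.toNat_of_nonneg (Int.emod_nonneg t (by norm_num))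
  refine ⟨(t / 4).negOnePow, ⟨(t % 4).toNat, by omega⟩, hr, ?_⟩
  conv_lhs => rw [← Int.mul_ediv_add_emod t 4, zpow_add₀ A_ne_zero, zpow_mul, ← hr]
  rw [Int.cast_negOnePow, zpow_natCast, zpow_ofNat, A_pow_four]

lemma mem_ZPhi_iff {w : ℂ} : w ∈ ZPhi ↔ ∃ n t : ℤ, w = n * A ^ t := by
  constructor
  · rintro ⟨n, z, hz, rfl⟩
    obtain ⟨j, -, rfl⟩ := A_isPrimitiveRoot.eq_pow_of_pow_eq_one hz
    exact ⟨n, j, by rw [zpow_natCast]⟩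
  · rintro ⟨n, t, rfl⟩
    refine ⟨n, A ^ t, ?_, rfl⟩
    rw [← zpow_natCast, ← zpow_mul, mul_comm, zpow_mul, zpow_natCast,
      A_isPrimitiveRoot.pow_eq_one, one_zpow]

lemma mul_A_zpow_mem_ZPhi_iff (w : ℂ) (m : ℤ) : w * A ^ m ∈ ZPhi ↔ w ∈ ZPhi := by
  simp only [mem_ZPhi_iff]
  constructor
  · rintro ⟨n, t, h⟩
    exact ⟨n, t - m, by
      rw [zpow_sub₀ A_ne_zero, mul_div_assoc', ← h,
        mul_div_cancel_right₀ _ (zpow_ne_zero m A_ne_zero)]⟩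
  · rintro ⟨n, t, rfl⟩
    exact ⟨n, t + m, by rw [zpow_add₀ A_ne_zero, mul_assoc]⟩

lemma linearIndependent_A_pow : LinearIndependent ℤ (fun i : Fin 4 => A ^ (i : ℕ)) := by
  have hdeg : (minpoly ℚ A).natDegree = 4 := by
    rw [← Polynomial.cyclotomic_eq_minpoly_rat A_isPrimitiveRoot (by norm_num),
      Polynomial.natDegree_cyclotomic]
    decide
  exact ((linearIndependent_pow A).comp (Fin.cast hdeg.symm) (Fin.cast_injective _)).restrict_scalars'
    ℤ

lemma int_mul_A_zpow_add_int_mem_ZPhi_iff (a b d : ℤ) :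
    (a : ℂ) * A ^ d + b ∈ ZPhi ↔ a * b = 0 ∨ 4 ∣ d := by
  rw [mem_ZPhi_iff]
  constructor
  · rw [or_iff_not_imp_right, mul_eq_zero]
    rintro ⟨n, t, h⟩ hd
    obtain ⟨u, r, hr, hAd⟩ := exists_A_zpow_eq_unit_mul_pow d
    obtain ⟨u', s, -, hAt⟩ := exists_A_zpow_eq_unit_mul_pow t
    have hr0 : r ≠ 0 := by
      rintro rfl
      exact hd (Int.dvd_of_emod_eq_zero (by simpa using hr.symm))
    have h' : (a * u) • A ^ (r : ℕ) + b • A ^ ((0 : Fin 4) : ℕ) = (n * u') • A ^ (s : ℕ) := by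
      rw [hAd, hAt] at h
      simp only [zsmul_eq_mul, Fin.val_zero, pow_zero, mul_one]
      push_cast
      linear_combination h
    simpa using linearIndependent_A_pow.eq_zero_or_eq_zero_of_smul_add_smul_eq_smul hr0 h'
  · rintro (hab | ⟨q, rfl⟩)
    · rcases mul_eq_zero.mp hab with rfl | rfl
      · exact ⟨b, 0, by simp⟩
      · exact ⟨a, d, by simp⟩
    · refine ⟨a * (q.negOnePow : ℤ) + b, 0, ?_⟩
      rw [zpow_mul, zpow_ofNat, A_pow_four, ← Int.cast_negOnePow, zpow_zero]
      push_cast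
      ring

theorem kauffman_bracket_integrality (a b k l : ℤ) :
    ((a : ℂ) * A ^ k + (b : ℂ) * A ^ l ∈ ZPhi) ↔ (a * b = 0 ∨ k ≡ l [ZMOD 4]) := by
  have hshift : (a : ℂ) * A ^ k + b * A ^ l = ((a : ℂ) * A ^ (k - l) + b) * A ^ l := by
    rw [zpow_sub₀ A_ne_zero, add_mul, mul_assoc, div_mul_cancel₀ _ (zpow_ne_zero l A_ne_zero)]
  rw [hshift, mul_A_zpow_mem_ZPhi_iff, int_mul_A_zpow_add_int_mem_ZPhi_iff, Int.modEq_iff_dvd,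
    dvd_sub_comm]
end

section
/- Let A = e^{iπ/4} ∈ ℂ and Φ = {z ∈ ℂ : z⁸ = 1}. Let p, q, k, l be integers with l ≡ k + 2 (mod 4). Then there exists a pair (α, β) ∈ ℤ² such that the set {(z·p·Aᵏ, i·z·q·Aˡ) : z ∈ Φ} ∩ (ℤ × ℤ) (i.e., the set of those pairs both of whose coordinates are integers, identified with their integer values) equals {(α, β), (−α, −β)}; moreover, (α, β) is unique up to this simultaneous sign change: any (α', β') ∈ ℤ² with the same property satisfies (α', β') = (α, β) or (α', β') = (−α, −β). -/
open Complex

/-- The pair of integers `(u, v)` occurs as `(z·p·Aᵏ, i·z·q·Aˡ)` for some 8th root of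
unity `z`. -/
def KrebesPair (p q k l : ℤ) (u v : ℤ) : Prop :=
  ∃ z : ℂ, z ^ 8 = 1 ∧ (u : ℂ) = z * (p : ℂ) * A ^ k ∧ (v : ℂ) = Complex.I * z * (q : ℂ) * A ^ l

lemma A_sq : A ^ 2 = I := by
  rw [A, ← exp_nat_mul,
    show ((2 : ℕ) : ℂ) * (Real.pi * I / 4) = Real.pi / 2 * I by push_cast; ring,
    exp_pi_div_two_mul_I]

lemma A_pow_eight : A ^ 8 = 1 := by
  rw [show 8 = 4 * 2 from rfl, pow_mul, A_pow_four, neg_one_sq]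

lemma A_zpow_pow_eight (k : ℤ) : (A ^ k) ^ 8 = 1 := by
  rw [← zpow_natCast, ← zpow_mul, mul_comm, zpow_mul, zpow_natCast, A_pow_eight, one_zpow]

lemma exists_A_zpow_eq_intCast_mul_I_mul {k l : ℤ} (h : l ≡ k + 2 [ZMOD 4]) :
    ∃ c : ℤ, A ^ l = c * I * A ^ k := by
  obtain ⟨m, hm⟩ := h.symm.dvd
  refine ⟨m.negOnePow, ?_⟩
  rw [show l = k + 2 + 4 * m by omega, zpow_add₀ A_ne_zero, zpow_add₀ A_ne_zero, zpow_mul,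
    zpow_ofNat, zpow_ofNat, A_sq, A_pow_four, Int.cast_negOnePow]
  ring

lemma krebesPair_iff_of_zpow_eq {p q k l c : ℤ} (hc : A ^ l = c * I * A ^ k) (u v : ℤ) :
    KrebesPair p q k l u v ↔
      ∃ w : ℂ, w ^ 8 = 1 ∧ (u : ℂ) = p * w ∧ (v : ℂ) = ((-c * q : ℤ) : ℂ) * w := by
  have hAk : A ^ k * A ^ (-k) = 1 := by rw [← zpow_add₀ A_ne_zero, add_neg_cancel, zpow_zero]
  constructor
  · rintro ⟨z, hz, hu, hv⟩
    refine ⟨z * A ^ k, by rw [mul_pow, hz, A_zpow_pow_eight, one_mul], by rw [hu]; ring, ?_⟩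
    rw [hv, hc]
    push_cast
    linear_combination (c * q * z * A ^ k) * I_mul_I
  · rintro ⟨w, hw, hu, hv⟩
    refine ⟨w * A ^ (-k), by rw [mul_pow, hw, A_zpow_pow_eight, one_mul], ?_, ?_⟩
    · linear_combination hu - p * w * hAk
    · rw [hv, hc]
      push_cast
      linear_combination (c * q * w) * hAk - (c * q * w * A ^ k * A ^ (-k)) * I_mul_I

lemma eq_one_or_eq_neg_one_of_intCast_eq_mul {n : ℕ} (hn : n ≠ 0) {w : ℂ} (hw : w ^ n = 1)
    {a u : ℤ} (ha : a ≠ 0) (hu : (u : ℂ) = a * w) : w = 1 ∨ w = -1 := by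
  have ha' : (a : ℂ) ≠ 0 := Int.cast_ne_zero.mpr ha
  have habs : |u| = |a| := by
    have := congrArg norm hu
    rw [norm_mul, norm_eq_one_of_pow_eq_one hw hn, mul_one, norm_intCast, norm_intCast] at this
    exact_mod_cast this
  rcases abs_eq_abs.mp habs with rfl | rfl
  · exact .inl (mul_left_cancel₀ ha' (by rw [← hu, mul_one]))
  · exact .inr (mul_left_cancel₀ ha' (by rw [← hu, mul_neg_one, Int.cast_neg]))

lemma exists_pow_eq_one_intCast_eq_mul_iff {n : ℕ} (hn : n ≠ 0) (hn_even : Even n) (a b u v : ℤ) :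
    (∃ w : ℂ, w ^ n = 1 ∧ (u : ℂ) = a * w ∧ (v : ℂ) = b * w) ↔
      (u = a ∧ v = b) ∨ (u = -a ∧ v = -b) := by
  constructor
  · rintro ⟨w, hw, hu, hv⟩
    have hw' : w = 1 ∨ w = -1 ∨ (a = 0 ∧ b = 0) := by
      by_cases ha : a = 0
      · by_cases hb : b = 0
        · exact .inr (.inr ⟨ha, hb⟩)
        · exact (eq_one_or_eq_neg_one_of_intCast_eq_mul hn hw hb hv).imp_right .inl
      · exact (eq_one_or_eq_neg_one_of_intCast_eq_mul hn hw ha hu).imp_right .inl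
    rcases hw' with rfl | rfl | ⟨rfl, rfl⟩
    · exact .inl ⟨by exact_mod_cast hu.trans (mul_one _), by exact_mod_cast hv.trans (mul_one _)⟩
    · exact .inr ⟨by exact_mod_cast hu.trans (mul_neg_one _),
        by exact_mod_cast hv.trans (mul_neg_one _)⟩
    · simp only [Int.cast_zero, zero_mul, Int.cast_eq_zero] at hu hv
      exact .inl ⟨hu, hv⟩
  · rintro (⟨rfl, rfl⟩ | ⟨rfl, rfl⟩)
    · exact ⟨1, one_pow n, by rw [mul_one], by rw [mul_one]⟩
    · exact ⟨-1, hn_even.neg_one_pow, by push_cast; ring, by push_cast; ring⟩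

theorem krebes_invariant_well_defined (p q k l : ℤ) (h : l ≡ k + 2 [ZMOD 4]) :
    ∃ α β : ℤ,
      (∀ u v : ℤ, KrebesPair p q k l u v ↔ ((u = α ∧ v = β) ∨ (u = -α ∧ v = -β))) ∧
      ∀ α' β' : ℤ,
        (∀ u v : ℤ, KrebesPair p q k l u v ↔ ((u = α' ∧ v = β') ∨ (u = -α' ∧ v = -β'))) →
        ((α' = α ∧ β' = β) ∨ (α' = -α ∧ β' = -β)) := by
  obtain ⟨c, hc⟩ := exists_A_zpow_eq_intCast_mul_I_mul h
  have hpairs (u v : ℤ) : KrebesPair p q k l u v ↔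
      (u = p ∧ v = -c * q) ∨ (u = -p ∧ v = -(-c * q)) :=
    (krebesPair_iff_of_zpow_eq hc u v).trans
      (exists_pow_eq_one_intCast_eq_mul_iff (by norm_num) (by decide) _ _ _ _)
  refine ⟨p, -c * q, hpairs, fun α' β' h' => ?_⟩
  exact (hpairs α' β').mp ((h' α' β').mpr (.inl ⟨rfl, rfl⟩))
end

section
/- Let n ≥ 1 be a natural number, and let A and B be 2 × 2ⁿ matrices over ℤ. Suppose that for every n-tuple (y₁, …, yₙ) of column vectors, each yⱼ taken from the three vectors e₁ = (1,0)ᵀ, e₂ = (0,1)ᵀ, x = (1,1)ᵀ in ℤ², the matrix–vector products satisfy A·ξⁿ(y₁, …, yₙ) = B·ξⁿ(y₁, …, yₙ) or A·ξⁿ(y₁, …, yₙ) = −B·ξⁿ(y₁, …, yₙ). Then A = B or A = −B. -/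
open Matrix

/-- The dictionary-order (iterated Kronecker) product `ξⁿ(y₁, …, yₙ) ∈ ℤ^{2ⁿ}` of `n`
column vectors in `ℤ²`: the entry at position `d ∈ {1,2}ⁿ` is `∏ⱼ (yⱼ)_{dⱼ}`. -/
def xi (n : ℕ) (y : Fin n → Fin 2 → ℤ) : (Fin n → Fin 2) → ℤ :=
  fun d => ∏ j, y j (d j)

/-! Split the columns of `M` by their first index into two blocks `M₁, M₂`. Then `M` acts on
`ξⁿ⁺¹(v, y₂, …)` as the contraction `v₁ M₁ + v₂ M₂` acts on `ξⁿ(y₂, …)`, so taking `v = e₁, e₂, x`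
and inducting on `n` gives `A₁ = ±B₁`, `A₂ = ±B₂` and `A₁ + A₂ = ±(B₁ + B₂)`. As integer matrices
have no `2`-torsion, these three signs are consistent only if `A₁ = B₁, A₂ = B₂` or
`A₁ = -B₁, A₂ = -B₂`. -/

instance Matrix.isAddTorsionFree {m n α : Type*} [AddMonoid α] [IsAddTorsionFree α] :
    IsAddTorsionFree (Matrix m n α) :=
  inferInstanceAs (IsAddTorsionFree (m → n → α))

theorem eq_and_eq_or_eq_neg_and_eq_neg_of_add {G : Type*} [AddCommGroup G] [IsAddTorsionFree G]
    {a b c d : G} (hab : a = b ∨ a = -b) (hcd : c = d ∨ c = -d)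
    (hsum : a + c = b + d ∨ a + c = -(b + d)) :
    (a = b ∧ c = d) ∨ (a = -b ∧ c = -d) := by
  rcases hab with hab | hab <;> rcases hcd with hcd | hcd <;> subst a c
  · exact .inl ⟨rfl, rfl⟩
  · rcases hsum with h | h
    · have hd : d = 0 := neg_eq_self.mp (add_left_cancel h)
      simp [hd]
    · have hb : b = 0 := self_eq_neg.mp (add_right_cancel (h.trans (neg_add b d)))
      simp [hb]
  · rcases hsum with h | h
    · have hb : b = 0 := neg_eq_self.mp (add_right_cancel h)
      simp [hb]
    · have hd : d = 0 := self_eq_neg.mp (add_left_cancel (h.trans (neg_add b d)))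
      simp [hd]
  · exact .inr ⟨rfl, rfl⟩

theorem Matrix.ext_submatrix_cons {m α R : Type*} {n : ℕ} {M N : Matrix m (Fin (n + 1) → α) R}
    (h : ∀ k, M.submatrix id (Fin.cons k) = N.submatrix id (Fin.cons k)) : M = N := by
  ext i d
  rw [← Fin.cons_self_tail d]
  exact congrFun (congrFun (h (d 0)) i) (Fin.tail d)

theorem xi_cons {n : ℕ} (v : Fin 2 → ℤ) (y : Fin n → Fin 2 → ℤ) (k : Fin 2) (d : Fin n → Fin 2) :
    xi (n + 1) (Fin.cons v y) (Fin.cons k d) = v k * xi n y d := by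
  simp [xi, Fin.prod_univ_succ]

section MulVecXi

variable {m : Type*}

def headContract {n : ℕ} (M : Matrix m (Fin (n + 1) → Fin 2) ℤ) (v : Fin 2 → ℤ) :
    Matrix m (Fin n → Fin 2) ℤ :=
  ∑ k, v k • M.submatrix id (Fin.cons k)

theorem headContract_vecCons {n : ℕ} (M : Matrix m (Fin (n + 1) → Fin 2) ℤ) (a b : ℤ) :
    headContract M ![a, b] =
      a • M.submatrix id (Fin.cons 0) + b • M.submatrix id (Fin.cons 1) := by
  simp [headContract, Fin.sum_univ_two]

theorem mulVec_xi_cons {n : ℕ} (M : Matrix m (Fin (n + 1) → Fin 2) ℤ) (v : Fin 2 → ℤ)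
    (y : Fin n → Fin 2 → ℤ) :
    M *ᵥ xi (n + 1) (Fin.cons v y) = headContract M v *ᵥ xi n y := by
  funext i
  simp only [mulVec, dotProduct, headContract, Matrix.sum_apply, Matrix.smul_apply,
    submatrix_apply, id, smul_eq_mul, Finset.sum_mul]
  rw [← (Fin.consEquiv fun _ => Fin 2).sum_comp, Fintype.sum_prod_type, Finset.sum_comm]
  refine Finset.sum_congr rfl fun d _ => Finset.sum_congr rfl fun k _ => ?_
  change M i (Fin.cons k d) * xi (n + 1) (Fin.cons v y) (Fin.cons k d) = _
  rw [xi_cons]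
  ring

theorem mulVec_xi_zero_injective (y : Fin 0 → Fin 2 → ℤ) :
    Function.Injective fun M : Matrix m (Fin 0 → Fin 2) ℤ => M *ᵥ xi 0 y := by
  intro M N h
  ext i d
  simpa [mulVec, dotProduct, xi, Unique.eq_default d] using congrFun h i

theorem eq_or_eq_neg_of_forall_mulVec_xi (n : ℕ) (A B : Matrix m (Fin n → Fin 2) ℤ)
    (h : ∀ y : Fin n → Fin 2 → ℤ,
      (∀ j, y j = ![1, 0] ∨ y j = ![0, 1] ∨ y j = ![1, 1]) →
      A *ᵥ xi n y = B *ᵥ xi n y ∨ A *ᵥ xi n y = -(B *ᵥ xi n y)) :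
    A = B ∨ A = -B := by
  induction n with
  | zero =>
    have h₀ := h ![] finZeroElim
    rw [← neg_mulVec] at h₀
    exact h₀.imp (mulVec_xi_zero_injective _ ·) (mulVec_xi_zero_injective _ ·)
  | succ n ih =>
    have hcontract : ∀ v : Fin 2 → ℤ, (v = ![1, 0] ∨ v = ![0, 1] ∨ v = ![1, 1]) →
        headContract A v = headContract B v ∨ headContract A v = -headContract B v := by
      intro v hv
      refine ih _ _ fun y hy => ?_
      simpa only [mulVec_xi_cons] using h (Fin.cons v y) (Fin.forall_fin_succ.2 ⟨hv, hy⟩)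
    have h₀ := hcontract ![1, 0] (.inl rfl)
    have h₁ := hcontract ![0, 1] (.inr (.inl rfl))
    have h₀₁ := hcontract ![1, 1] (.inr (.inr rfl))
    simp only [headContract_vecCons, one_smul, zero_smul, add_zero, zero_add] at h₀ h₁ h₀₁
    rcases eq_and_eq_or_eq_neg_and_eq_neg_of_add h₀ h₁ h₀₁ with ⟨e₀, e₁⟩ | ⟨e₀, e₁⟩
    · exact .inl (ext_submatrix_cons (Fin.forall_fin_two.2 ⟨e₀, e₁⟩))
    · refine .inr (ext_submatrix_cons (Fin.forall_fin_two.2 ⟨?_, ?_⟩)) <;>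
        rwa [submatrix_neg]

end MulVecXi

theorem eq_of_forall_mulVec_xi_eq_general (n : ℕ)
    (A B : Matrix (Fin 2) (Fin n → Fin 2) ℤ)
    (h : ∀ y : Fin n → Fin 2 → ℤ,
      (∀ j, y j = ![1, 0] ∨ y j = ![0, 1] ∨ y j = ![1, 1]) →
      A.mulVec (xi n y) = B.mulVec (xi n y) ∨ A.mulVec (xi n y) = -(B.mulVec (xi n y))) :
    A = B ∨ A = -B :=
  eq_or_eq_neg_of_forall_mulVec_xi n A B h

theorem eq_of_forall_mulVec_xi_eq (n : ℕ) (hn : 1 ≤ n)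
    (A B : Matrix (Fin 2) (Fin n → Fin 2) ℤ)
    (h : ∀ y : Fin n → Fin 2 → ℤ,
      (∀ j, y j = ![1, 0] ∨ y j = ![0, 1] ∨ y j = ![1, 1]) →
      A.mulVec (xi n y) = B.mulVec (xi n y) ∨ A.mulVec (xi n y) = -(B.mulVec (xi n y))) :
    A = B ∨ A = -B :=
  eq_of_forall_mulVec_xi_eq_general n A B h
end

section
/- Let A and B be 2 × 2 matrices over ℤ. If for each of the three column vectors v ∈ {(1,0)ᵀ, (0,1)ᵀ, (1,1)ᵀ} one has A·v = B·v or A·v = −B·v, then A = B or A = −B. -/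
open Matrix

theorem eq_of_mulVec_eq_on_three_vectors (A B : Matrix (Fin 2) (Fin 2) ℤ)
    (h : ∀ v : Fin 2 → ℤ, (v = ![1, 0] ∨ v = ![0, 1] ∨ v = ![1, 1]) →
      A.mulVec v = B.mulVec v ∨ A.mulVec v = -(B.mulVec v)) :
    A = B ∨ A = -B := by
  have h1 := h ![1, 0] (Or.inl rfl)
  have h2 := h ![0, 1] (Or.inr (Or.inl rfl))
  have h3 := h ![1, 1] (Or.inr (Or.inr rfl))
  simp only [funext_iff, Fin.forall_fin_two, mulVec, dotProduct,
    Fin.sum_univ_two, Matrix.cons_val_zero, Matrix.cons_val_one,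
    Matrix.head_cons, Pi.neg_apply, mul_one, mul_zero, zero_add, add_zero] at h1 h2 h3
  have goal : (∀ i j, A i j = B i j) ∨ (∀ i j, A i j = -B i j) := by
    simp only [Fin.forall_fin_two]
    rcases h1 with ⟨p1, p2⟩ | ⟨p1, p2⟩ <;>
      rcases h2 with ⟨q1, q2⟩ | ⟨q1, q2⟩ <;>
      rcases h3 with ⟨r1, r2⟩ | ⟨r1, r2⟩ <;> omega
  rcases goal with g | g
  · left; ext i j; exact g i j
  · right; ext i j; simpa using g i j
end

section
/- Let PM₂ denote the quotient of the 2 × 2 integer matrices by the identification M ∼ −M, and let [minus], [rot], [star] denote the bijections of PM₂ induced by the maps minus([[α,γ],[β,δ]]) = [[δ,γ],[β,α]], rot([[α,γ],[β,δ]]) = [[−γ,α],[−δ,β]], star([[α,γ],[β,δ]]) = [[α,−γ],[−β,δ]] (each commutes with negation, hence descends to the quotient). Then [star] does not belong to the subgroup of the permutation group of PM₂ generated by [minus] and [rot]; in particular, for every word W in [minus] and [rot], the composite W is different from [star] as a map PM₂ → PM₂. -/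
open Matrix

/-- The operation on invariants induced by taking the mirror image `S*`. -/
def starOp (M : Matrix (Fin 2) (Fin 2) ℤ) : Matrix (Fin 2) (Fin 2) ℤ :=
  !![M 0 0, -M 0 1; -M 1 0, M 1 1]

/-- The operation on invariants induced by interchanging inner and outer holes `S⁻`. -/
def minusOp (M : Matrix (Fin 2) (Fin 2) ℤ) : Matrix (Fin 2) (Fin 2) ℤ :=
  !![M 1 1, M 0 1; M 1 0, M 0 0]

/-- The operation on invariants induced by rotating the inner hole 90° counterclockwise. -/
def rotOp (M : Matrix (Fin 2) (Fin 2) ℤ) : Matrix (Fin 2) (Fin 2) ℤ :=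
  !![-M 0 1, M 0 0; -M 1 1, M 1 0]

/-- The setoid on `2 × 2` integer matrices identifying `M` with `-M`. -/
def pmSetoid : Setoid (Matrix (Fin 2) (Fin 2) ℤ) where
  r M N := M = N ∨ M = -N
  iseqv := by
    constructor
    · exact fun _ => Or.inl rfl
    · rintro M N (rfl | rfl)
      · exact Or.inl rfl
      · exact Or.inr (neg_neg N).symm
    · rintro M N P (rfl | rfl) (rfl | rfl) <;> simp

/-- `PM_{2×2}(ℤ)`: `2 × 2` integer matrices modulo multiplication by `±1`. -/
def PM2 : Type := Quotient pmSetoid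

lemma starOp_neg (M : Matrix (Fin 2) (Fin 2) ℤ) : starOp (-M) = -(starOp M) := by
  ext i j; fin_cases i <;> fin_cases j <;> simp [starOp]

lemma minusOp_neg (M : Matrix (Fin 2) (Fin 2) ℤ) : minusOp (-M) = -(minusOp M) := by
  ext i j; fin_cases i <;> fin_cases j <;> simp [minusOp]

lemma rotOp_neg (M : Matrix (Fin 2) (Fin 2) ℤ) : rotOp (-M) = -(rotOp M) := by
  ext i j; fin_cases i <;> fin_cases j <;> simp [rotOp]

lemma starOp_starOp (M : Matrix (Fin 2) (Fin 2) ℤ) : starOp (starOp M) = M := by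
  ext i j; fin_cases i <;> fin_cases j <;> simp [starOp]

lemma minusOp_minusOp (M : Matrix (Fin 2) (Fin 2) ℤ) : minusOp (minusOp M) = M := by
  ext i j; fin_cases i <;> fin_cases j <;> simp [minusOp]

lemma rotOp_rotOp (M : Matrix (Fin 2) (Fin 2) ℤ) : rotOp (rotOp M) = -M := by
  ext i j; fin_cases i <;> fin_cases j <;> simp [rotOp]

private lemma respects (f : Matrix (Fin 2) (Fin 2) ℤ → Matrix (Fin 2) (Fin 2) ℤ)
    (hf : ∀ M, f (-M) = -(f M)) :
    ∀ M N, pmSetoid.r M N → pmSetoid.r (f M) (f N) := by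
  rintro M N (rfl | rfl)
  · exact Or.inl rfl
  · exact Or.inr (hf N)

/-- The bijection of `PM2` induced by `starOp`. -/
def qStar : Equiv.Perm PM2 where
  toFun := Quotient.map starOp (respects starOp starOp_neg)
  invFun := Quotient.map starOp (respects starOp starOp_neg)
  left_inv := by
    intro q
    induction q using Quotient.inductionOn with
    | h M => exact congrArg (Quotient.mk pmSetoid) (starOp_starOp M)
  right_inv := by
    intro q
    induction q using Quotient.inductionOn with
    | h M => exact congrArg (Quotient.mk pmSetoid) (starOp_starOp M)

/-- The bijection of `PM2` induced by `minusOp`. -/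
def qMinus : Equiv.Perm PM2 where
  toFun := Quotient.map minusOp (respects minusOp minusOp_neg)
  invFun := Quotient.map minusOp (respects minusOp minusOp_neg)
  left_inv := by
    intro q
    induction q using Quotient.inductionOn with
    | h M => exact congrArg (Quotient.mk pmSetoid) (minusOp_minusOp M)
  right_inv := by
    intro q
    induction q using Quotient.inductionOn with
    | h M => exact congrArg (Quotient.mk pmSetoid) (minusOp_minusOp M)

/-- The bijection of `PM2` induced by `rotOp` (an involution on the quotient,
since `rotOp (rotOp M) = -M ∼ M`). -/
def qRot : Equiv.Perm PM2 where
  toFun := Quotient.map rotOp (respects rotOp rotOp_neg)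
  invFun := Quotient.map rotOp (respects rotOp rotOp_neg)
  left_inv := by
    intro q
    induction q using Quotient.inductionOn with
    | h M => exact Quotient.sound (by rw [rotOp_rotOp]; exact Or.inr rfl)
  right_inv := by
    intro q
    induction q using Quotient.inductionOn with
    | h M => exact Quotient.sound (by rw [rotOp_rotOp]; exact Or.inr rfl)

/-- The base matrix used to separate `qStar` from the subgroup generated by
`qMinus` and `qRot`. -/
def M₀ : Matrix (Fin 2) (Fin 2) ℤ := !![1, 2; 3, 4]

/-- The (finite) orbit of `M₀` under `minusOp`, `rotOp`, and negation. -/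
def orbitL : List (Matrix (Fin 2) (Fin 2) ℤ) :=
  [!![1,2;3,4], !![-1,-2;-3,-4],
   !![4,2;3,1], !![-4,-2;-3,-1],
   !![2,-1;4,-3], !![-2,1;-4,3],
   !![2,-4;1,-3], !![-2,4;-1,3],
   !![3,1;-4,-2], !![-3,-1;4,2],
   !![3,4;-1,-2], !![-3,-4;1,2],
   !![-1,3;2,-4], !![1,-3;-2,4],
   !![4,-3;-2,1], !![-4,3;2,-1]]

lemma orbit_neg : ∀ M ∈ orbitL, -M ∈ orbitL := by decide

lemma orbit_minus : ∀ M ∈ orbitL, minusOp M ∈ orbitL := by decide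

lemma orbit_rot : ∀ M ∈ orbitL, rotOp M ∈ orbitL := by decide

/-- The orbit as a predicate on `PM2`. -/
def inOrbit : PM2 → Prop :=
  Quotient.lift (fun M => M ∈ orbitL) (by
    rintro M N (rfl | rfl)
    · rfl
    · refine propext ⟨fun h => ?_, fun h => ?_⟩
      · have := orbit_neg _ h; simpa using this
      · exact orbit_neg _ h)

lemma inOrbit_qMinus : ∀ x : PM2, inOrbit x → inOrbit (qMinus x) := by
  intro x
  induction x using Quotient.inductionOn with
  | h M => exact fun h => orbit_minus _ h

lemma inOrbit_qRot : ∀ x : PM2, inOrbit x → inOrbit (qRot x) := by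
  intro x
  induction x using Quotient.inductionOn with
  | h M => exact fun h => orbit_rot _ h

lemma qMinus_inv : qMinus⁻¹ = qMinus := rfl
lemma qRot_inv : qRot⁻¹ = qRot := rfl

theorem star_not_in_closure_minus_rot :
    qStar ∉ Subgroup.closure ({qMinus, qRot} : Set (Equiv.Perm PM2)) ∧
    ∀ L : List (Equiv.Perm PM2), (∀ g ∈ L, g = qMinus ∨ g = qRot) →
      ⇑L.prod ≠ ⇑qStar := by
  have key : ∀ g ∈ Subgroup.closure ({qMinus, qRot} : Set (Equiv.Perm PM2)),
      (∀ x : PM2, inOrbit x → inOrbit (g x)) ∧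
      (∀ x : PM2, inOrbit x → inOrbit (g⁻¹ x)) := by
    intro g hg
    induction hg using Subgroup.closure_induction with
    | mem y hy =>
      rcases hy with rfl | rfl
      · exact ⟨inOrbit_qMinus, by rw [qMinus_inv]; exact inOrbit_qMinus⟩
      · exact ⟨inOrbit_qRot, by rw [qRot_inv]; exact inOrbit_qRot⟩
    | one => exact ⟨fun x h => h, fun x h => h⟩
    | mul a b _ _ ha hb =>
      exact ⟨fun x h => ha.1 _ (hb.1 _ h), fun x h => hb.2 _ (ha.2 _ h)⟩
    | inv a _ ha => exact ⟨ha.2, by simpa using ha.1⟩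
  have h0 : inOrbit ⟦M₀⟧ := by show M₀ ∈ orbitL; decide
  have hstar : ¬ inOrbit (qStar ⟦M₀⟧) := by
    show starOp M₀ ∉ orbitL; decide
  have main : qStar ∉ Subgroup.closure ({qMinus, qRot} : Set (Equiv.Perm PM2)) := by
    intro hmem
    exact hstar ((key _ hmem).1 _ h0)
  refine ⟨main, ?_⟩
  intro L hL hcoe
  have hLq : L.prod = qStar := DFunLike.coe_injective hcoe
  apply main
  rw [← hLq]
  refine Subgroup.list_prod_mem _ (fun g hg => ?_)
  rcases hL g hg with rfl | rfl
  · exact Subgroup.subset_closure (by simp)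
  · exact Subgroup.subset_closure (by simp)
end

section
/- Let PM₂ denote the quotient of the 2 × 2 integer matrices by the identification M ∼ −M, and let [minus], [rot], [star] denote the bijections of PM₂ induced by minus([[α,γ],[β,δ]]) = [[δ,γ],[β,α]], rot([[α,γ],[β,δ]]) = [[−γ,α],[−δ,β]], star([[α,γ],[β,δ]]) = [[α,−γ],[−β,δ]]. Let G(F) be the subgroup of the permutation group of PM₂ generated by [minus], [rot], [star]. Then G(F) is isomorphic to the group presented on three generators x, y, z with relators x², y², z², (xyxy)(yxyx)⁻¹, xz x⁻¹z⁻¹, yz y⁻¹z⁻¹ (i.e. ⟨x, y, z | x² = y² = z² = 1, xyxy = yxyx, xz = zx, yz = zy⟩), via an isomorphism sending x to [minus], y to [rot], and z to [star]. -/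
open Matrix

/-- The relators `x², y², z², xyxy(yxyx)⁻¹, xzx⁻¹z⁻¹, yzy⁻¹z⁻¹` on three generators. -/
def rels : Set (FreeGroup (Fin 3)) :=
  { FreeGroup.of 0 ^ 2, FreeGroup.of 1 ^ 2, FreeGroup.of 2 ^ 2,
    (FreeGroup.of 0 * FreeGroup.of 1 * FreeGroup.of 0 * FreeGroup.of 1) *
      (FreeGroup.of 1 * FreeGroup.of 0 * FreeGroup.of 1 * FreeGroup.of 0)⁻¹,
    FreeGroup.of 0 * FreeGroup.of 2 * (FreeGroup.of 0)⁻¹ * (FreeGroup.of 2)⁻¹,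
    FreeGroup.of 1 * FreeGroup.of 2 * (FreeGroup.of 1)⁻¹ * (FreeGroup.of 2)⁻¹ }

/-! The defining relations hold for `[minus]`, `[rot]`, `[star]`, since on matrices they hold up
to a global sign. Conversely, they force every element of the presented group to be one of the
sixteen words `zᵉ w` with `w` in the dihedral group `{1, x, y, xy, yx, xyx, yxy, xyxy}`. None of
the fifteen nontrivial words fixes the class of `[[1, 2], [3, 5]]`, so the induced homomorphism to
`Equiv.Perm PM2` is injective, and its image is generated by the images of the generators. -/

open Subgroup

namespace PM2

def mk (M : Matrix (Fin 2) (Fin 2) ℤ) : PM2 := Quotient.mk pmSetoid M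

lemma mk_neg (M : Matrix (Fin 2) (Fin 2) ℤ) : mk (-M) = mk M :=
  Quotient.sound (Or.inr rfl)

lemma perm_ext {σ τ : Equiv.Perm PM2} (h : ∀ M, σ (mk M) = τ (mk M)) : σ = τ :=
  Equiv.ext fun q => Quotient.inductionOn q h

instance : DecidableEq PM2 := fun p q =>
  Quotient.recOnSubsingleton₂ p q fun M N =>
    decidable_of_iff (M = N ∨ M = -N) (Quotient.eq (r := pmSetoid)).symm

end PM2

lemma qRot_mk (M : Matrix (Fin 2) (Fin 2) ℤ) :
    qRot (PM2.mk M) = PM2.mk (rotOp M) := rfl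

lemma qStar_mk (M : Matrix (Fin 2) (Fin 2) ℤ) :
    qStar (PM2.mk M) = PM2.mk (starOp M) := rfl

lemma minusOp_starOp (M : Matrix (Fin 2) (Fin 2) ℤ) : minusOp (starOp M) = starOp (minusOp M) := by
  ext i j; fin_cases i <;> fin_cases j <;> simp [minusOp, starOp]

lemma rotOp_starOp (M : Matrix (Fin 2) (Fin 2) ℤ) : rotOp (starOp M) = -starOp (rotOp M) := by
  ext i j; fin_cases i <;> fin_cases j <;> simp [rotOp, starOp]

lemma minusOp_rotOp_minusOp_rotOp (M : Matrix (Fin 2) (Fin 2) ℤ) :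
    minusOp (rotOp (minusOp (rotOp M))) = rotOp (minusOp (rotOp (minusOp M))) := by
  ext i j; fin_cases i <;> fin_cases j <;> simp [minusOp, rotOp]

lemma qMinus_mul_self : qMinus * qMinus = 1 :=
  PM2.perm_ext fun M => congrArg PM2.mk (minusOp_minusOp M)

lemma qRot_mul_self : qRot * qRot = 1 :=
  PM2.perm_ext fun M => by
    simp only [Equiv.Perm.mul_apply, qRot_mk, rotOp_rotOp, PM2.mk_neg, Equiv.Perm.one_apply]

lemma qStar_mul_self : qStar * qStar = 1 :=
  PM2.perm_ext fun M => congrArg PM2.mk (starOp_starOp M)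

lemma qMinus_qRot_braid : qMinus * qRot * qMinus * qRot = qRot * qMinus * qRot * qMinus :=
  PM2.perm_ext fun M => congrArg PM2.mk (minusOp_rotOp_minusOp_rotOp M)

lemma commute_qMinus_qStar : Commute qMinus qStar :=
  PM2.perm_ext fun M => congrArg PM2.mk (minusOp_starOp M)

lemma commute_qRot_qStar : Commute qRot qStar :=
  PM2.perm_ext fun M => by
    simp only [Equiv.Perm.mul_apply, qRot_mk, qStar_mk, rotOp_starOp, PM2.mk_neg]

section NormalForm

variable {G H : Type*} [Group G] [Group H] {a b c : G}

def SatisfiesRels (a b c : G) : Prop :=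
  a * a = 1 ∧ b * b = 1 ∧ c * c = 1 ∧ a * b * a * b = b * a * b * a ∧ Commute a c ∧ Commute b c

lemma lift_rels_eq_one_iff :
    (∀ r ∈ rels, FreeGroup.lift ![a, b, c] r = 1) ↔ SatisfiesRels a b c := by
  simp only [rels, Set.mem_insert_iff, Set.mem_singleton_iff, forall_eq_or_imp, forall_eq,
    map_mul, map_inv, FreeGroup.lift_apply_of, Matrix.cons_val_zero, Matrix.cons_val_one,
    Matrix.cons_val_two, pow_two, mul_inv_eq_iff_eq_mul]
  simp [SatisfiesRels, Commute, SemiconjBy]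

def dihedralWord (a b : G) : Fin 8 → G :=
  ![1, a, b, a * b, b * a, a * b * a, b * a * b, a * b * a * b]

lemma exists_dihedralWord_eq_mul (ha : a * a = 1) (hb : b * b = 1)
    (hab : a * b * a * b = b * a * b * a) (i : Fin 8) :
    (∃ j, a * dihedralWord a b i = dihedralWord a b j) ∧
      (∃ j, b * dihedralWord a b i = dihedralWord a b j) := by
  -- rewriting to shortlex normal form, with the words associated to the right
  have ha' (t : G) : a * (a * t) = t := by rw [← mul_assoc, ha, one_mul]
  have hb' (t : G) : b * (b * t) = t := by rw [← mul_assoc, hb, one_mul]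
  have hba : b * (a * (b * a)) = a * (b * (a * b)) := by simp only [← mul_assoc, hab]
  have hba' (t : G) : b * (a * (b * (a * t))) = a * (b * (a * (b * t))) := by
    simp only [← mul_assoc, hab]
  fin_cases i <;>
    simp [dihedralWord, Fin.exists_fin_succ, mul_assoc, ha, hb, ha', hb', hba, hba']

def normalForm (a b c : G) (e : Bool) (i : Fin 8) : G :=
  (if e then c else 1) * dihedralWord a b i

lemma map_normalForm (f : G →* H) (e : Bool) (i : Fin 8) :
    f (normalForm a b c e i) = normalForm (f a) (f b) (f c) e i := by
  cases e <;> fin_cases i <;> simp [normalForm, dihedralWord]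

lemma exists_normalForm_eq_mul (h : SatisfiesRels a b c) {s : G} (hs : s ∈ ({a, b, c} : Set G))
    (e : Bool) (i : Fin 8) : ∃ e' i', s * normalForm a b c e i = normalForm a b c e' i' := by
  obtain ⟨ha, hb, hc, hab, hac, hbc⟩ := h
  have hcomm {s : G} (hsc : Commute s c) (w : G) :
      s * ((if e then c else 1) * w) = (if e then c else 1) * (s * w) := by
    cases e <;> simp only [Bool.false_eq_true, if_false, if_true, one_mul, ← mul_assoc, hsc.eq]
  obtain ⟨⟨j, hj⟩, ⟨k, hk⟩⟩ := exists_dihedralWord_eq_mul ha hb hab i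
  rcases hs with rfl | rfl | rfl
  · exact ⟨e, j, by rw [normalForm, hcomm hac, hj, normalForm]⟩
  · exact ⟨e, k, by rw [normalForm, hcomm hbc, hk, normalForm]⟩
  · refine ⟨!e, i, ?_⟩
    cases e <;> simp [normalForm, ← mul_assoc, hc]

lemma exists_normalForm_of_mem_closure (h : SatisfiesRels a b c) {g : G}
    (hg : g ∈ closure {a, b, c}) : ∃ e i, g = normalForm a b c e i := by
  induction hg using closure_induction_left with
  | one => exact ⟨false, 0, by simp [normalForm, dihedralWord]⟩
  | mul_left s hs g _ ih =>
    obtain ⟨e, i, rfl⟩ := ih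
    exact exists_normalForm_eq_mul h hs e i
  | inv_mul_cancel s hs g _ ih =>
    obtain ⟨e, i, rfl⟩ := ih
    have hss : s * s = 1 := by
      obtain ⟨ha, hb, hc, -⟩ := h
      rcases hs with rfl | rfl | rfl <;> assumption
    rw [inv_eq_of_mul_eq_one_right hss]
    exact exists_normalForm_eq_mul h hs e i

end NormalForm

lemma satisfiesRels_of :
    SatisfiesRels (PresentedGroup.of 0 : PresentedGroup rels) (.of 1) (.of 2) := by
  have hmk : FreeGroup.lift ![PresentedGroup.of 0, .of 1, .of 2] = PresentedGroup.mk rels :=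
    FreeGroup.ext_hom _ _ fun i => by fin_cases i <;> rfl
  exact lift_rels_eq_one_iff.1 fun r hr => hmk ▸ PresentedGroup.one_of_mem hr

lemma closure_of_eq_top :
    closure {PresentedGroup.of 0, .of 1, .of 2} = (⊤ : Subgroup (PresentedGroup rels)) := by
  rw [← PresentedGroup.closure_range_of]
  congr 1
  ext
  simp [Fin.exists_fin_succ, eq_comm]

def presentedToPerm : PresentedGroup rels →* Equiv.Perm PM2 :=
  PresentedGroup.toGroup <| lift_rels_eq_one_iff.2
    ⟨qMinus_mul_self, qRot_mul_self, qStar_mul_self, qMinus_qRot_braid,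
      commute_qMinus_qStar, commute_qRot_qStar⟩

lemma presentedToPerm_of (i : Fin 3) :
    presentedToPerm (.of i) = ![qMinus, qRot, qStar] i :=
  PresentedGroup.toGroup.of _

-- The sixteen words act on the entries as signed permutations, distinct modulo `±1`; a matrix
-- whose entries have distinct absolute values therefore has trivial stabiliser.
lemma normalForm_apply_eq_self_iff (e : Bool) (i : Fin 8) :
    normalForm qMinus qRot qStar e i (PM2.mk !![1, 2; 3, 5]) =
      PM2.mk !![1, 2; 3, 5] ↔ e = false ∧ i = 0 := by
  revert e i
  decide

lemma presentedToPerm_injective : Function.Injective presentedToPerm := by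
  refine (injective_iff_map_eq_one _).2 fun g hg => ?_
  obtain ⟨e, i, rfl⟩ :=
    exists_normalForm_of_mem_closure satisfiesRels_of (closure_of_eq_top ▸ mem_top g)
  rw [map_normalForm] at hg
  simp only [presentedToPerm_of, Matrix.cons_val_zero, Matrix.cons_val_one, Matrix.cons_val]
    at hg
  obtain ⟨rfl, rfl⟩ := (normalForm_apply_eq_self_iff e i).1 (by rw [hg]; rfl)
  simp [normalForm, dihedralWord]

lemma presentedToPerm_range : presentedToPerm.range = closure {qMinus, qRot, qStar} := by
  rw [MonoidHom.range_eq_map, ← closure_of_eq_top, MonoidHom.map_closure]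
  simp [Set.image_insert_eq, presentedToPerm_of]

theorem GF_presentation :
    ∃ φ : PresentedGroup rels ≃*
        ↥(Subgroup.closure ({qMinus, qRot, qStar} : Set (Equiv.Perm PM2))),
      ((φ (PresentedGroup.of 0) : Equiv.Perm PM2) = qMinus ∧
       (φ (PresentedGroup.of 1) : Equiv.Perm PM2) = qRot ∧
       (φ (PresentedGroup.of 2) : Equiv.Perm PM2) = qStar) :=
  ⟨(MonoidHom.ofInjective presentedToPerm_injective).trans
      (MulEquiv.subgroupCongr presentedToPerm_range),
    presentedToPerm_of 0, presentedToPerm_of 1, presentedToPerm_of 2⟩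
end
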